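/- arXiv:2205.08921 — 2 statements merged into one kernel-verified Lean document; each statement's English description precedes it below -/
import Mathlib

section
/- Let W satisfy (Self) with constant λ ≤ 0, let V satisfy (Cross) and additionally be λ'-convex for some λ' ≤ 0, and let ν be a nonnegative finite Borel measure on ℝ^d with ν(ℝ^d) ≤ M. Let ξ, η ∈ P₂(ℝ^d), let γ be an optimal coupling of ξ and η for the 2-Wasserstein distance (i.e. γ ∈ Γ(ξ,η) and ∫|x−y|² dγ = d_{W₂}²(ξ,η)), and for s ∈ [0,1] set γ_s := ((1−s)π₁ + sπ₂)_# γ, where π₁, π₂ are the coordinate projections. Then for all s ∈ [0,1], ℱ_ν(γ_s) ≤ (1−s) ℱ_ν(ξ) + s ℱ_ν(η) − (1 + M/2) λ̄ s(1−s) d_{W₂}²(ξ,η), where λ̄ = min{λ, λ'}. -/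
/-! Along `T_s = (1 - s) π₁ + s π₂`, both terms of the energy are integrals of `λ`-convex
functions evaluated at convex combinations of coupled points. For the self-interaction,
`T_s p - T_s q` is the combination of `p₁ - q₁` and `p₂ - q₂` under `γ ⊗ γ`, and
`‖(p₁ - q₁) - (p₂ - q₂)‖² ≤ 2‖p₁ - p₂‖² + 2‖q₁ - q₂‖²`; for the cross-interaction, the
convolution `x ↦ ∫ V (x - w) dν` is `λ' ν(ℝ^d)`-convex. Integrating the pointwise convexity
inequalities against the optimal coupling turns `∫ ‖p₁ - p₂‖² dγ` into `d_{W₂}²(ξ, η)`. -/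

open MeasureTheory Filter
open scoped ENNReal NNReal

noncomputable section

/-- Euclidean space `ℝ^d`. -/
abbrev Rd (d : ℕ) := EuclideanSpace ℝ (Fin d)

/-- The set of couplings of two measures: measures on the product space with the
prescribed marginals. -/
def couplings {d : ℕ} (μ ν : Measure (Rd d)) : Set (Measure (Rd d × Rd d)) :=
  {γ | γ.map Prod.fst = μ ∧ γ.map Prod.snd = ν}

/-- Optimal transport cost with squared-distance cost, in `ℝ≥0∞`. -/
def cost2 {d : ℕ} (μ ν : Measure (Rd d)) : ℝ≥0∞ :=
  ⨅ γ ∈ couplings μ ν, ∫⁻ z : Rd d × Rd d, ENNReal.ofReal (‖z.1 - z.2‖ ^ 2) ∂γ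

/-- The squared 2-Wasserstein distance `d_{W₂}²(μ,ν)`, as a real number. -/
def W2sq {d : ℕ} (μ ν : Measure (Rd d)) : ℝ := (cost2 μ ν).toReal

/-- Membership in `P₂(ℝ^d)`: probability measure with finite second moment. -/
def MemP2 {d : ℕ} (μ : Measure (Rd d)) : Prop :=
  IsProbabilityMeasure μ ∧ ∫⁻ x, ENNReal.ofReal (‖x‖ ^ 2) ∂μ < ⊤

/-- The energy functional `ℱ_ν(μ) = (1/2)∫∫W(x-y) dμ(y) dμ(x) + ∫∫V(x-y) dν(y) dμ(x)`. -/
def energy {d : ℕ} (W V : Rd d → ℝ) (ν μ : Measure (Rd d)) : ℝ :=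
  (1 / 2) * ∫ x, (∫ y, W (x - y) ∂μ) ∂μ + ∫ x, (∫ y, V (x - y) ∂ν) ∂μ

/-- Assumption (Self) on the self-interaction potential `W`, with gradient `W'` away from
the origin, convexity parameter `lam ≤ 0` and Lipschitz constant `KW`. -/
structure IsSelfPotential {d : ℕ} (W : Rd d → ℝ) (W' : Rd d → Rd d) (lam : ℝ) (KW : ℝ≥0) :
    Prop where
  cont : Continuous W
  grad : ∀ x : Rd d, x ≠ 0 → HasGradientAt W (W' x) x
  grad_cont : ContinuousOn W' {(0 : Rd d)}ᶜ
  even : ∀ x, W (-x) = W x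
  lip : LipschitzWith KW W
  zero_at_zero : W 0 = 0
  growth : ∃ C > 0, ∀ x, W x ≤ C * (1 + ‖x‖ ^ 2)
  lam_nonpos : lam ≤ 0
  lam_convex : ConvexOn ℝ Set.univ fun x => W x - lam / 2 * ‖x‖ ^ 2

/-- Assumption (Cross) on the cross-interaction potential `V`, with gradient `V'` and
Lipschitz constant `KV`. -/
structure IsCrossPotential {d : ℕ} (V : Rd d → ℝ) (V' : Rd d → Rd d) (KV : ℝ≥0) :
    Prop where
  contDiff : ContDiff ℝ 1 V
  grad : ∀ x, HasGradientAt V (V' x) x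
  lip : LipschitzWith KV V
  bddBelow : ∃ V₀ : ℝ, ∀ x, V₀ ≤ V x

open Set

section Integrals

variable {Ω E F : Type*} [MeasurableSpace Ω] {μ : Measure Ω}
  [NormedAddCommGroup E] [NormedAddCommGroup F]

lemma LipschitzWith.integrable_comp [IsFiniteMeasure μ] {K : ℝ≥0} {f : E → F}
    (hf : LipschitzWith K f) {X : Ω → E} (hX : Integrable X μ) :
    Integrable (fun ω => f (X ω)) μ := by
  refine ((hX.norm.const_mul K).add (integrable_const ‖f 0‖)).mono'
    (hf.continuous.comp_aestronglyMeasurable hX.1) (ae_of_all _ fun ω => ?_)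
  have h := hf.norm_sub_le (X ω) 0
  rw [sub_zero] at h
  show ‖f (X ω)‖ ≤ K * ‖X ω‖ + ‖f 0‖
  linarith [norm_sub_norm_le (f (X ω)) (f 0)]

variable [NormedSpace ℝ E]

theorem StrongConvexOn.integral_comp_add_le {m : ℝ} {f : E → ℝ} (hf : StrongConvexOn univ m f)
    {X Y : Ω → E} {a b : ℝ} (ha : 0 ≤ a) (hb : 0 ≤ b) (hab : a + b = 1)
    (hfX : Integrable (fun ω => f (X ω)) μ) (hfY : Integrable (fun ω => f (Y ω)) μ)
    (hfXY : Integrable (fun ω => f (a • X ω + b • Y ω)) μ)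
    (hXY : Integrable (fun ω => ‖X ω - Y ω‖ ^ 2) μ) :
    ∫ ω, f (a • X ω + b • Y ω) ∂μ ≤
      a * ∫ ω, f (X ω) ∂μ + b * ∫ ω, f (Y ω) ∂μ - a * b * (m / 2) * ∫ ω, ‖X ω - Y ω‖ ^ 2 ∂μ := by
  have hsum : Integrable (fun ω => a * f (X ω) + b * f (Y ω)) μ :=
    (hfX.const_mul a).add (hfY.const_mul b)
  have hsq : Integrable (fun ω => a * b * (m / 2) * ‖X ω - Y ω‖ ^ 2) μ := hXY.const_mul _
  calc ∫ ω, f (a • X ω + b • Y ω) ∂μ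
      ≤ ∫ ω, (a * f (X ω) + b * f (Y ω) - a * b * (m / 2) * ‖X ω - Y ω‖ ^ 2) ∂μ :=
        integral_mono hfXY (hsum.sub hsq) fun ω => by
          simpa [mul_assoc, mul_left_comm] using
            hf.2 (mem_univ (X ω)) (mem_univ (Y ω)) ha hb hab
    _ = _ := by
        rw [integral_sub hsum hsq, integral_add (hfX.const_mul a) (hfY.const_mul b),
          integral_const_mul, integral_const_mul, integral_const_mul]

end Integrals

section Convolution

variable {E : Type*} [NormedAddCommGroup E] [MeasurableSpace E] [OpensMeasurableSpace E]
  {ν : Measure E} [IsFiniteMeasure ν] {V : E → ℝ} {K : ℝ≥0}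

lemma LipschitzWith.integrable_comp_sub (hV : LipschitzWith K V) {x : E}
    (hx : Integrable (fun w => V (x - w)) ν) (y : E) : Integrable (fun w => V (y - w)) ν := by
  refine (hx.norm.add (integrable_const (K * ‖y - x‖))).mono'
    (hV.continuous.comp (continuous_const.sub continuous_id)).aestronglyMeasurable
    (ae_of_all _ fun w => ?_)
  have h := hV.norm_sub_le (y - w) (x - w)
  rw [sub_sub_sub_cancel_right] at h
  show ‖V (y - w)‖ ≤ ‖V (x - w)‖ + K * ‖y - x‖
  linarith [norm_sub_norm_le (V (y - w)) (V (x - w))]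

lemma LipschitzWith.integrable_comp_sub_or_integral_eq_zero (hV : LipschitzWith K V) :
    (∀ x, Integrable (fun w => V (x - w)) ν) ∨ (fun x => ∫ w, V (x - w) ∂ν) = 0 := by
  by_cases h : ∃ x, Integrable (fun w => V (x - w)) ν
  · obtain ⟨x, hx⟩ := h
    exact Or.inl (hV.integrable_comp_sub hx)
  · push Not at h
    exact Or.inr (funext fun x => integral_undef (h x))

lemma LipschitzWith.integral_comp_sub (hV : LipschitzWith K V) :
    LipschitzWith (K * (ν univ).toNNReal) (fun x => ∫ w, V (x - w) ∂ν) := by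
  rcases hV.integrable_comp_sub_or_integral_eq_zero (ν := ν) with hint | hzero
  · refine LipschitzWith.of_dist_le_mul fun x y => ?_
    rw [dist_eq_norm, dist_eq_norm, ← integral_sub (hint x) (hint y), NNReal.coe_mul,
      ENNReal.coe_toNNReal_eq_toReal, ← measureReal_def, mul_right_comm]
    refine norm_integral_le_of_norm_le_const (ae_of_all _ fun w => ?_)
    simpa [sub_sub_sub_cancel_right] using hV.norm_sub_le (x - w) (y - w)
  · rw [hzero]
    exact (LipschitzWith.const 0).weaken bot_le

variable [NormedSpace ℝ E]

-- If `w ↦ V (x - w)` is not `ν`-integrable, the convolution is the junk value `0`, which is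
-- `m`-strongly convex only for `m ≤ 0`.
theorem StrongConvexOn.integral_comp_sub {m : ℝ} (hV : StrongConvexOn univ m V)
    (hV' : LipschitzWith K V) (hm : m ≤ 0) :
    StrongConvexOn univ (m * ν.real univ) (fun x => ∫ w, V (x - w) ∂ν) := by
  rcases hV'.integrable_comp_sub_or_integral_eq_zero (ν := ν) with hint | hzero
  · refine ⟨convex_univ, fun x _ y _ a b ha hb hab => ?_⟩
    have hcomb : ∀ w, a • (x - w) + b • (y - w) = a • x + b • y - w := fun w =>
      calc a • (x - w) + b • (y - w) = a • x + b • y - (a + b) • w := by module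
        _ = a • x + b • y - w := by rw [hab, one_smul]
    have h := hV.integral_comp_add_le (μ := ν) (X := fun w => x - w) (Y := fun w => y - w)
      ha hb hab (hint x) (hint y) (by simpa only [hcomb] using hint (a • x + b • y))
      (by simpa only [sub_sub_sub_cancel_right] using integrable_const (‖x - y‖ ^ 2))
    simp only [hcomb, sub_sub_sub_cancel_right, integral_const, smul_eq_mul] at h
    simp only [smul_eq_mul]
    linarith
  · rw [hzero]
    exact (strongConvexOn_zero.mpr (convexOn_const 0 convex_univ)).mono
      (mul_nonpos_of_nonpos_of_nonneg hm measureReal_nonneg)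

end Convolution

section Interpolation

variable {α E : Type*} [MeasurableSpace α] [NormedAddCommGroup E]

lemma norm_sub_sq_le_two_mul {F : Type*} [SeminormedAddCommGroup F] (u v : F) :
    ‖u - v‖ ^ 2 ≤ 2 * (‖u‖ ^ 2 + ‖v‖ ^ 2) :=
  (pow_le_pow_left₀ (norm_nonneg _) (norm_sub_le u v) 2).trans add_sq_le

lemma integral_norm_sub_sq_prod_le {ρ : Measure α} [IsProbabilityMeasure ρ] {D : α → E}
    (hD : MemLp D 2 ρ) :
    ∫ p, ‖D p.1 - D p.2‖ ^ 2 ∂(ρ.prod ρ) ≤ 4 * ∫ x, ‖D x‖ ^ 2 ∂ρ := by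
  have h1 : Integrable (fun p : α × α => ‖D p.1‖ ^ 2) (ρ.prod ρ) :=
    (hD.integrable_norm_pow two_ne_zero).comp_fst ρ
  have h2 : Integrable (fun p : α × α => ‖D p.2‖ ^ 2) (ρ.prod ρ) :=
    (hD.integrable_norm_pow two_ne_zero).comp_snd ρ
  calc ∫ p, ‖D p.1 - D p.2‖ ^ 2 ∂(ρ.prod ρ)
      ≤ ∫ p, 2 * (‖D p.1‖ ^ 2 + ‖D p.2‖ ^ 2) ∂(ρ.prod ρ) :=
        integral_mono (((hD.comp_fst ρ).sub (hD.comp_snd ρ)).integrable_norm_pow two_ne_zero)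
          ((h1.add h2).const_mul 2) fun p => norm_sub_sq_le_two_mul _ _
    _ = 4 * ∫ x, ‖D x‖ ^ 2 ∂ρ := by
        rw [integral_const_mul, integral_add h1 h2, integral_fun_fst (fun x => ‖D x‖ ^ 2),
          integral_fun_snd (fun x => ‖D x‖ ^ 2)]
        simp only [probReal_univ, one_smul]
        ring

lemma integral_integral_map_eq_integral_prod {β : Type*} [MeasurableSpace β] {ρ : Measure α}
    [SFinite ρ] {f : α → β} (hf : Measurable f) {g : β → β → ℝ}
    (hg : StronglyMeasurable (Function.uncurry g))
    (hint : Integrable (fun p : α × α => g (f p.1) (f p.2)) (ρ.prod ρ)) :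
    ∫ x, ∫ y, g x y ∂(ρ.map f) ∂(ρ.map f) = ∫ p, g (f p.1) (f p.2) ∂(ρ.prod ρ) := by
  have hff : Measurable (Prod.map f f) := hf.prodMap hf
  have hint' : Integrable (Function.uncurry g) ((ρ.map f).prod (ρ.map f)) := by
    rw [Measure.map_prod_map ρ ρ hf hf,
      integrable_map_measure hg.aestronglyMeasurable hff.aemeasurable]
    exact hint
  refine (integral_prod _ hint').symm.trans ?_
  rw [Measure.map_prod_map ρ ρ hf hf, integral_map hff.aemeasurable hg.aestronglyMeasurable]
  rfl

variable [NormedSpace ℝ E] [MeasurableSpace E] [BorelSpace E] [SecondCountableTopology E]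
  {γ : Measure (E × E)} {m a b : ℝ} {K : ℝ≥0} {f : E → ℝ}

theorem StrongConvexOn.integral_map_add_le [IsFiniteMeasure γ] (hf : StrongConvexOn univ m f)
    (hf' : LipschitzWith K f) (h1 : MemLp Prod.fst 2 γ) (h2 : MemLp Prod.snd 2 γ)
    (ha : 0 ≤ a) (hb : 0 ≤ b) (hab : a + b = 1) :
    ∫ x, f x ∂(γ.map fun z => a • z.1 + b • z.2) ≤
      a * ∫ x, f x ∂(γ.map Prod.fst) + b * ∫ x, f x ∂(γ.map Prod.snd) -
        a * b * (m / 2) * ∫ z, ‖z.1 - z.2‖ ^ 2 ∂γ := by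
  have hT : Measurable fun z : E × E => a • z.1 + b • z.2 := by fun_prop
  have hX := h1.integrable one_le_two
  have hY := h2.integrable one_le_two
  rw [integral_map hT.aemeasurable hf'.continuous.aestronglyMeasurable,
    integral_map measurable_fst.aemeasurable hf'.continuous.aestronglyMeasurable,
    integral_map measurable_snd.aemeasurable hf'.continuous.aestronglyMeasurable]
  exact hf.integral_comp_add_le ha hb hab (hf'.integrable_comp hX) (hf'.integrable_comp hY)
    (hf'.integrable_comp ((hX.smul a).add (hY.smul b)))
    ((h1.sub h2).integrable_norm_pow two_ne_zero)

theorem StrongConvexOn.integral_integral_map_add_le [IsProbabilityMeasure γ]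
    (hf : StrongConvexOn univ m f) (hf' : LipschitzWith K f) (hm : m ≤ 0)
    (h1 : MemLp Prod.fst 2 γ) (h2 : MemLp Prod.snd 2 γ)
    (ha : 0 ≤ a) (hb : 0 ≤ b) (hab : a + b = 1) :
    ∫ x, ∫ y, f (x - y) ∂(γ.map fun z => a • z.1 + b • z.2) ∂(γ.map fun z => a • z.1 + b • z.2) ≤
      a * ∫ x, ∫ y, f (x - y) ∂(γ.map Prod.fst) ∂(γ.map Prod.fst) +
        b * ∫ x, ∫ y, f (x - y) ∂(γ.map Prod.snd) ∂(γ.map Prod.snd) -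
          2 * a * b * m * ∫ z, ‖z.1 - z.2‖ ^ 2 ∂γ := by
  set X : (E × E) × (E × E) → E := fun p => p.1.1 - p.2.1
  set Y : (E × E) × (E × E) → E := fun p => p.1.2 - p.2.2
  have hX : Integrable X (γ.prod γ) :=
    ((h1.integrable one_le_two).comp_fst γ).sub ((h1.integrable one_le_two).comp_snd γ)
  have hY : Integrable Y (γ.prod γ) :=
    ((h2.integrable one_le_two).comp_fst γ).sub ((h2.integrable one_le_two).comp_snd γ)
  have hXY : ∀ p, X p - Y p = (p.1.1 - p.1.2) - (p.2.1 - p.2.2) := fun p => by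
    simp only [X, Y]; abel
  have hD : MemLp (fun z : E × E => z.1 - z.2) 2 γ := h1.sub h2
  have hcomb : ∀ p : (E × E) × (E × E),
      a • p.1.1 + b • p.1.2 - (a • p.2.1 + b • p.2.2) = a • X p + b • Y p := fun p => by
    simp only [X, Y]; module
  have hg : StronglyMeasurable (Function.uncurry fun x y : E => f (x - y)) :=
    (hf'.continuous.comp continuous_sub).stronglyMeasurable
  have hT : Measurable fun z : E × E => a • z.1 + b • z.2 := by fun_prop
  calc _ = ∫ p, f (a • X p + b • Y p) ∂(γ.prod γ) := by
        rw [integral_integral_map_eq_integral_prod hT hg]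
        · simp only [hcomb]
        · simpa only [hcomb, Pi.add_apply, Pi.smul_apply] using
            hf'.integrable_comp ((hX.smul a).add (hY.smul b))
    _ ≤ a * ∫ p, f (X p) ∂(γ.prod γ) + b * ∫ p, f (Y p) ∂(γ.prod γ) -
          a * b * (m / 2) * ∫ p, ‖X p - Y p‖ ^ 2 ∂(γ.prod γ) :=
        hf.integral_comp_add_le ha hb hab (hf'.integrable_comp hX) (hf'.integrable_comp hY)
          (hf'.integrable_comp ((hX.smul a).add (hY.smul b)))
          (by simpa only [hXY, Pi.sub_apply] using
            ((hD.comp_fst γ).sub (hD.comp_snd γ)).integrable_norm_pow two_ne_zero)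
    _ ≤ a * ∫ p, f (X p) ∂(γ.prod γ) + b * ∫ p, f (Y p) ∂(γ.prod γ) -
          2 * a * b * m * ∫ z, ‖z.1 - z.2‖ ^ 2 ∂γ := by
        have h4 := integral_norm_sub_sq_prod_le hD
        simp only [← hXY] at h4
        have hab_m : 0 ≤ a * b * -(m / 2) := mul_nonneg (mul_nonneg ha hb) (by linarith)
        nlinarith [mul_le_mul_of_nonneg_left h4 hab_m]
    _ = _ := by
        rw [integral_integral_map_eq_integral_prod measurable_fst hg (hf'.integrable_comp hX),
          integral_integral_map_eq_integral_prod measurable_snd hg (hf'.integrable_comp hY)]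

end Interpolation

section Wasserstein

variable {d : ℕ} {ξ η : Measure (Rd d)} {γ : Measure (Rd d × Rd d)}

lemma MemP2.memLp_id {μ : Measure (Rd d)} (h : MemP2 μ) : MemLp id 2 μ :=
  (memLp_two_iff_integrable_sq_norm aestronglyMeasurable_id).mpr
    ⟨(continuous_norm.pow 2).aestronglyMeasurable,
      (hasFiniteIntegral_iff_ofReal (ae_of_all _ fun x => by positivity)).mpr h.2⟩

lemma isProbabilityMeasure_of_mem_couplings (hγ : γ ∈ couplings ξ η) (hξ : MemP2 ξ) :
    IsProbabilityMeasure γ := by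
  have := hξ.1
  rw [← hγ.1] at this
  exact Measure.isProbabilityMeasure_of_map Prod.fst

lemma memLp_fst_of_mem_couplings (hγ : γ ∈ couplings ξ η) (hξ : MemP2 ξ) :
    MemLp Prod.fst 2 γ := by
  have h := hξ.memLp_id
  rw [← hγ.1] at h
  exact (memLp_map_measure_iff aestronglyMeasurable_id measurable_fst.aemeasurable).mp h

lemma memLp_snd_of_mem_couplings (hγ : γ ∈ couplings ξ η) (hη : MemP2 η) :
    MemLp Prod.snd 2 γ := by
  have h := hη.memLp_id
  rw [← hγ.2] at h
  exact (memLp_map_measure_iff aestronglyMeasurable_id measurable_snd.aemeasurable).mp h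

lemma integral_norm_sub_sq_eq_W2sq
    (hγopt : ∫⁻ z : Rd d × Rd d, ENNReal.ofReal (‖z.1 - z.2‖ ^ 2) ∂γ = cost2 ξ η) :
    ∫ z, ‖z.1 - z.2‖ ^ 2 ∂γ = W2sq ξ η := by
  rw [integral_eq_lintegral_of_nonneg_ae (ae_of_all _ fun z => by positivity)
    (by fun_prop : Continuous fun z : Rd d × Rd d => ‖z.1 - z.2‖ ^ 2).aestronglyMeasurable,
    hγopt, W2sq]

end Wasserstein

/-- Convexity inequality for the energy functional `ℱ_ν` along Wasserstein geodesic
interpolations `γ_s = ((1−s)π₁ + sπ₂)_#γ` of an optimal coupling `γ` of `ξ, η`: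
`ℱ_ν(γ_s) ≤ (1−s)ℱ_ν(ξ) + sℱ_ν(η) − (1 + M/2) λ̄ s(1−s) d_{W₂}²(ξ,η)` with
`λ̄ = min{λ, λ'}`. -/
theorem statement_6 {d : ℕ} (W : Rd d → ℝ) (W' : Rd d → Rd d) (lam : ℝ) (KW : ℝ≥0)
    (hW : IsSelfPotential W W' lam KW)
    (V : Rd d → ℝ) (V' : Rd d → Rd d) (KV : ℝ≥0) (hV : IsCrossPotential V V' KV)
    (lam' : ℝ) (hlam' : lam' ≤ 0)
    (hVconv : ConvexOn ℝ Set.univ fun x => V x - lam' / 2 * ‖x‖ ^ 2)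
    (M : ℝ) (ν : Measure (Rd d)) (hνfin : IsFiniteMeasure ν)
    (hνM : (ν Set.univ).toReal ≤ M)
    (ξ η : Measure (Rd d)) (hξ : MemP2 ξ) (hη : MemP2 η)
    (γ : Measure (Rd d × Rd d)) (hγ : γ ∈ couplings ξ η)
    (hγopt : ∫⁻ z : Rd d × Rd d, ENNReal.ofReal (‖z.1 - z.2‖ ^ 2) ∂γ = cost2 ξ η) :
    ∀ s ∈ Set.Icc (0 : ℝ) 1,
      energy W V ν
          (Measure.map (fun z : Rd d × Rd d => (1 - s) • z.1 + s • z.2) γ) ≤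
        (1 - s) * energy W V ν ξ + s * energy W V ν η -
          (1 + M / 2) * min lam lam' * (s * (1 - s)) * W2sq ξ η := by
  rintro s ⟨hs0, hs1⟩
  have := isProbabilityMeasure_of_mem_couplings hγ hξ
  have h1 := memLp_fst_of_mem_couplings hγ hξ
  have h2 := memLp_snd_of_mem_couplings hγ hη
  have hs : 0 ≤ 1 - s := sub_nonneg.mpr hs1
  have hself := (strongConvexOn_iff_convex.mpr hW.lam_convex).integral_integral_map_add_le
    hW.lip hW.lam_nonpos h1 h2 hs hs0 (sub_add_cancel 1 s)
  have hcross := ((strongConvexOn_iff_convex.mpr hVconv).integral_comp_sub (ν := ν) hV.lip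
    hlam').integral_map_add_le hV.lip.integral_comp_sub h1 h2 hs hs0 (sub_add_cancel 1 s)
  rw [hγ.1, hγ.2, integral_norm_sub_sq_eq_W2sq hγopt] at hself hcross
  have hP : 0 ≤ s * (1 - s) * W2sq ξ η := mul_nonneg (mul_nonneg hs0 hs) ENNReal.toReal_nonneg
  have hν : 0 ≤ ν.real Set.univ := measureReal_nonneg
  have hlam : 0 ≤ (lam - min lam lam') * (s * (1 - s) * W2sq ξ η) :=
    mul_nonneg (sub_nonneg.mpr (min_le_left _ _)) hP
  have hlam'M : 0 ≤ (lam' - min lam lam') * M * (s * (1 - s) * W2sq ξ η) :=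
    mul_nonneg (mul_nonneg (sub_nonneg.mpr (min_le_right _ _)) (hν.trans hνM)) hP
  have hνM' : 0 ≤ -lam' * (M - ν.real Set.univ) * (s * (1 - s) * W2sq ξ η) :=
    mul_nonneg (mul_nonneg (neg_nonneg.mpr hlam') (sub_nonneg.mpr hνM)) hP
  unfold energy
  linarith

end
end

section
/- Let W satisfy (Self), let ρ be a Borel probability measure on ℝ^d, and let ξ ∈ C_c^∞(ℝ^d). Then lim_{ε→0} (1/ε) ∫∫ [ W(x−y+ε(∇ξ(x)−∇ξ(y))) − W(x−y) ] dρ(x) dρ(y) = ∫∫_{x ≠ y} ∇W(x−y)·(∇ξ(x)−∇ξ(y)) dρ(x) dρ(y). -/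
open MeasureTheory Filter
open scoped ENNReal NNReal RealInnerProductSpace

noncomputable section

/-- Directional difference quotients converge to the inner product with the gradient. -/
lemma slope_tendsto_inner {d : ℕ} {W : Rd d → ℝ} {g : Rd d} (z v : Rd d)
    (hW : HasGradientAt W g z) :
    Tendsto (fun ε : ℝ => ε⁻¹ * (W (z + ε • v) - W (z + (0:ℝ) • v)))
      (nhdsWithin 0 {(0:ℝ)}ᶜ) (nhds ⟪g, v⟫) := by
  have hline : HasDerivAt (fun t : ℝ => z + t • v) v 0 := by
    simpa using ((hasDerivAt_id (0:ℝ)).smul_const v).const_add z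
  have hcomp : HasDerivAt (fun t : ℝ => W (z + t • v)) ⟪g, v⟫ 0 := by
    have h0 : z + (0:ℝ) • v = z := by simp
    have hf : HasFDerivAt W (InnerProductSpace.toDual ℝ (Rd d) g :
        Rd d →L[ℝ] ℝ) ((fun t : ℝ => z + t • v) 0) := by simpa [h0] using hW.hasFDerivAt
    have := hf.comp_hasDerivAt (0:ℝ) hline
    simpa [InnerProductSpace.toDual_apply_apply, Function.comp_def] using this
  have := hcomp.tendsto_slope_zero
  simpa [zero_add] using this

/-- Differentiation of the self-interaction term along the smooth perturbation
`x ↦ x + ε∇ξ(x)`: the difference quotients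
`(1/ε) ∫∫ [W(x−y+ε(∇ξ(x)−∇ξ(y))) − W(x−y)] dρ(y) dρ(x)` converge, as `ε → 0`, to
`∫∫_{x≠y} ∇W(x−y)·(∇ξ(x)−∇ξ(y)) dρ(y) dρ(x)`. -/
theorem statement_15 {d : ℕ} (W : Rd d → ℝ) (W' : Rd d → Rd d) (lam : ℝ) (KW : ℝ≥0)
    (hW : IsSelfPotential W W' lam KW)
    (ρ : Measure (Rd d)) (hρ : IsProbabilityMeasure ρ)
    (ξ : Rd d → ℝ) (hξ : ContDiff ℝ (⊤ : ℕ∞) ξ) (hξsupp : HasCompactSupport ξ) :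
    Tendsto
      (fun ε : ℝ =>
        1 / ε *
          ∫ x, (∫ y,
            (W (x - y + ε • (gradient ξ x - gradient ξ y)) - W (x - y)) ∂ρ) ∂ρ)
      (nhdsWithin 0 {(0 : ℝ)}ᶜ)
      (nhds (∫ x, (∫ y in ({x} : Set (Rd d))ᶜ,
        ⟪W' (x - y), gradient ξ x - gradient ξ y⟫ ∂ρ) ∂ρ)) := by
  -- continuity and boundedness of the gradient of ξ
  have hgradeq : gradient ξ = fun x => (InnerProductSpace.toDual ℝ (Rd d)).symm
      (fderiv ℝ ξ x) := rfl
  have hgcont : Continuous (gradient ξ) := by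
    rw [hgradeq]
    exact (InnerProductSpace.toDual ℝ (Rd d)).symm.continuous.comp
      (hξ.continuous_fderiv (by simp))
  have hgsupp : HasCompactSupport (gradient ξ) := by
    rw [hgradeq]
    exact (hξsupp.fderiv ℝ).comp_left (by simp)
  obtain ⟨M, hM⟩ := hgsupp.exists_bound_of_continuous hgcont
  have hM0 : 0 ≤ M := le_trans (norm_nonneg _) (hM 0)
  set v : Rd d → Rd d → Rd d := fun x y => gradient ξ x - gradient ξ y with hv
  have hvb : ∀ x y, ‖v x y‖ ≤ 2 * M := by
    intro x y
    calc ‖v x y‖ ≤ ‖gradient ξ x‖ + ‖gradient ξ y‖ := norm_sub_le _ _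
    _ ≤ M + M := add_le_add (hM x) (hM y)
    _ = 2 * M := by ring
  set B : ℝ := (KW : ℝ) * (2 * M) with hB
  have hB0 : 0 ≤ B := mul_nonneg (KW.coe_nonneg) (by linarith)
  -- pointwise bound on difference quotients
  have hquot_bound : ∀ (ε : ℝ), ε ≠ 0 → ∀ x y : Rd d,
      |ε⁻¹ * (W (x - y + ε • v x y) - W (x - y))| ≤ B := by
    intro ε hε x y
    have h1 : |W (x - y + ε • v x y) - W (x - y)| ≤ (KW : ℝ) * (|ε| * ‖v x y‖) := by
      have := hW.lip.dist_le_mul (x - y + ε • v x y) (x - y)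
      simpa [Real.dist_eq, dist_eq_norm, norm_smul, Real.norm_eq_abs] using this
    rw [abs_mul, abs_inv]
    calc |ε|⁻¹ * |W (x - y + ε • v x y) - W (x - y)|
        ≤ |ε|⁻¹ * ((KW : ℝ) * (|ε| * ‖v x y‖)) := by
          exact mul_le_mul_of_nonneg_left h1 (by positivity)
      _ = (KW : ℝ) * ‖v x y‖ := by
          field_simp
      _ ≤ B := by
          exact mul_le_mul_of_nonneg_left (hvb x y) (KW.coe_nonneg)
  -- joint continuity of the integrand
  have hFcont : ∀ ε : ℝ, Continuous (fun p : Rd d × Rd d =>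
      ε⁻¹ * (W (p.1 - p.2 + ε • v p.1 p.2) - W (p.1 - p.2))) := by
    intro ε
    apply continuous_const.mul
    apply Continuous.sub
    · exact hW.cont.comp (((continuous_fst.sub continuous_snd).add
        (((hgcont.comp continuous_fst).sub
          (hgcont.comp continuous_snd)).const_smul ε)))
    · exact hW.cont.comp (continuous_fst.sub continuous_snd)
  -- rewrite LHS
  have hrw : (fun ε : ℝ =>
        1 / ε * ∫ x, (∫ y,
          (W (x - y + ε • (gradient ξ x - gradient ξ y)) - W (x - y)) ∂ρ) ∂ρ)
      = fun ε : ℝ => ∫ x, (∫ y,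
          ε⁻¹ * (W (x - y + ε • v x y) - W (x - y)) ∂ρ) ∂ρ := by
    funext ε
    rw [one_div, ← integral_const_mul]
    congr 1
    funext x
    rw [← integral_const_mul]
  rw [hrw]
  -- eventual nonzeroness
  have hev : ∀ᶠ ε : ℝ in nhdsWithin 0 {(0:ℝ)}ᶜ, ε ≠ 0 := by
    filter_upwards [self_mem_nhdsWithin] with ε hε using hε
  -- the limit integrand via indicator
  have hlim_eq : ∀ x : Rd d, (∫ y in ({x} : Set (Rd d))ᶜ,
      ⟪W' (x - y), gradient ξ x - gradient ξ y⟫ ∂ρ)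
      = ∫ y, Set.indicator ({x} : Set (Rd d))ᶜ
          (fun y => ⟪W' (x - y), v x y⟫) y ∂ρ := by
    intro x
    rw [integral_indicator (MeasurableSet.singleton x).compl]
  -- Main: dominated convergence
  apply tendsto_integral_filter_of_dominated_convergence (fun _ => B)
  · filter_upwards [hev] with ε hε
    exact ((hFcont ε).stronglyMeasurable.integral_prod_right').aestronglyMeasurable
  · filter_upwards [hev] with ε hε
    refine Filter.Eventually.of_forall (fun x => ?_)
    calc ‖∫ y, ε⁻¹ * (W (x - y + ε • v x y) - W (x - y)) ∂ρ‖
        ≤ B * (ρ Set.univ).toReal := by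
          apply norm_integral_le_of_norm_le_const
          exact Filter.Eventually.of_forall fun y => by
            rw [Real.norm_eq_abs]; exact hquot_bound ε hε x y
      _ = B := by simp
  · exact integrable_const B
  · refine Filter.Eventually.of_forall (fun x => ?_)
    rw [hlim_eq]
    apply tendsto_integral_filter_of_dominated_convergence (fun _ => B)
    · filter_upwards [hev] with ε hε
      exact ((hFcont ε).comp (Continuous.prodMk_right x)).aestronglyMeasurable
    · filter_upwards [hev] with ε hε
      exact Filter.Eventually.of_forall fun y => by
        rw [Real.norm_eq_abs]; exact hquot_bound ε hε x y
    · exact integrable_const B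
    · refine Filter.Eventually.of_forall (fun y => ?_)
      by_cases hxy : y = x
      · subst hxy
        have : (fun ε : ℝ => ε⁻¹ * (W (y - y + ε • v y y) - W (y - y))) = fun _ => 0 := by
          funext ε; simp [hv]
        rw [this, Set.indicator_of_notMem (by simp : y ∉ ({y} : Set (Rd d))ᶜ)]
        exact tendsto_const_nhds
      · have hz : x - y ≠ 0 := sub_ne_zero.2 (Ne.symm hxy)
        have := slope_tendsto_inner (x - y) (v x y) (hW.grad _ hz)
        rw [Set.indicator_of_mem (by simp [hxy] : y ∈ ({x} : Set (Rd d))ᶜ)]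
        simpa using this

end
end
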